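/- Let k ≥ 1 be an integer and set h = 1/k. Let u : ℝ → ℝ be twice continuously differentiable on [0,1] with u(0) = u(1) = 0, and let I_k u be the piecewise linear interpolant of u on the mesh {0, h, 2h, …, 1} (affine on each interval [ih, (i+1)h] with (I_k u)(ih) = u(ih)). Then ∫_0^1 (u(x) − (I_k u)(x))² dx ≤ (h/π)⁴ · ∫_0^1 u″(x)² dx. -/

import Mathlib

/-!
On a mesh interval `[a, b]` of length `h` the error `e = u - I_k u` vanishes at both ends and
`e'' = u''`. With `c = π / h`, Wirtinger's inequality `c² ∫ e² ≤ ∫ e'²` comes from the identity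
`e'² - c² e² = (e' - c e cot (c (x - a)))² + c (e² cot (c (x - a)))'`, whose boundary term vanishes
because `e` is `O(dist(x, {a, b}))` while `cot` has only simple poles. Integrating by parts,
`∫ e'² = -∫ e e''`, so `0 ≤ ∫ (e + κ e'')²` with `κ = (h / π)²` and Wirtinger give
`∫ e'² ≤ κ ∫ e''²`. Hence `∫ e² ≤ κ² ∫ e''²` on each interval; sum over the mesh.
-/

/-- Piecewise linear interpolant of `u` on the mesh `{0, 1/k, …, 1}`:
on each mesh interval `[i/k, (i+1)/k)` it is the affine function agreeing with `u`
at the nodes `i/k` and `(i+1)/k`. -/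
noncomputable def Ik (k : ℕ) (u : ℝ → ℝ) (x : ℝ) : ℝ :=
  u ((⌊x * k⌋ : ℝ) / k) +
    (u (((⌊x * k⌋ : ℝ) + 1) / k) - u ((⌊x * k⌋ : ℝ) / k)) * (x * k - (⌊x * k⌋ : ℝ))

open MeasureTheory intervalIntegral Real Set

theorem Real.hasDerivAt_cot {x : ℝ} (hx : sin x ≠ 0) : HasDerivAt cot (-1 / sin x ^ 2) x := by
  have h := (hasDerivAt_cos x).div (hasDerivAt_sin x) hx
  rw [show cos / sin = cot from funext fun y => (cot_eq_cos_div_sin y).symm] at h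
  rwa [show -sin x * sin x - cos x * cos x = -1 by linear_combination -sin_sq_add_cos_sq x] at h

lemma two_div_pi_mul_min_le_sin {t : ℝ} (h0 : 0 ≤ t) (hπ : t ≤ π) :
    2 / π * min t (π - t) ≤ sin t := by
  rcases le_total t (π / 2) with h | h
  · exact (mul_le_mul_of_nonneg_left (min_le_left _ _) (by positivity)).trans (mul_le_sin h0 h)
  · rw [← sin_pi_sub]
    exact (mul_le_mul_of_nonneg_left (min_le_right _ _) (by positivity)).trans
      (mul_le_sin (by linarith) (by linarith))

lemma min_mul_abs_cot_le {t : ℝ} (h0 : 0 ≤ t) (hπ : t ≤ π) :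
    min t (π - t) * |cot t| ≤ π / 2 := by
  have hsin := two_div_pi_mul_min_le_sin h0 hπ
  have hm : 0 ≤ min t (π - t) := le_min h0 (by linarith)
  rw [cot_eq_cos_div_sin, abs_div, abs_of_nonneg (sin_nonneg_of_nonneg_of_le_pi h0 hπ)]
  rcases (sin_nonneg_of_nonneg_of_le_pi h0 hπ).eq_or_lt with h | h
  · simp [← h]
    positivity
  · rw [← mul_div_assoc, div_le_iff₀ h]
    calc min t (π - t) * |cos t| ≤ min t (π - t) := mul_le_of_le_one_right hm (abs_cos_le_one t)
      _ ≤ π / 2 * sin t := by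
        rw [div_mul_eq_mul_div, le_div_iff₀ two_pos]
        rw [div_mul_eq_mul_div, div_le_iff₀ pi_pos] at hsin
        linarith

section Wirtinger

variable {a b : ℝ} {f f' : ℝ → ℝ}

lemma sin_pi_div_mul_sub_pos {x : ℝ} (hx : x ∈ Ioo a b) : 0 < sin (π / (b - a) * (x - a)) := by
  have hba : 0 < b - a := sub_pos.2 (hx.1.trans hx.2)
  refine sin_pos_of_pos_of_lt_pi (mul_pos (by positivity) (sub_pos.2 hx.1)) ?_
  calc π / (b - a) * (x - a) < π / (b - a) * (b - a) := by gcongr; exact hx.2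
    _ = π := by field_simp

lemma abs_le_mul_min_of_hasDerivWithinAt {M : ℝ}
    (hf : ∀ x ∈ Icc a b, HasDerivWithinAt f (f' x) (Icc a b) x) (hM : ∀ x ∈ Icc a b, ‖f' x‖ ≤ M)
    (ha : f a = 0) (hb : f b = 0) {x : ℝ} (hx : x ∈ Icc a b) :
    |f x| ≤ M * min (x - a) (b - x) := by
  have hM0 : 0 ≤ M := (norm_nonneg _).trans (hM x hx)
  have hleft := (convex_Icc a b).norm_image_sub_le_of_norm_hasDerivWithin_le hf hM
    (left_mem_Icc.2 (hx.1.trans hx.2)) hx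
  have hright := (convex_Icc a b).norm_image_sub_le_of_norm_hasDerivWithin_le hf hM
    (right_mem_Icc.2 (hx.1.trans hx.2)) hx
  rw [mul_min_of_nonneg _ _ hM0]
  refine le_min ?_ ?_
  · simpa [ha, abs_of_nonneg (sub_nonneg.2 hx.1)] using hleft
  · simpa [hb, abs_sub_comm x b, abs_of_nonneg (sub_nonneg.2 hx.2)] using hright

lemma abs_sq_mul_cot_le (hab : a < b) {M y x : ℝ} (hx : x ∈ Icc a b)
    (hy : |y| ≤ M * min (x - a) (b - x)) :
    |y ^ 2 * cot (π / (b - a) * (x - a))| ≤ M ^ 2 * (b - a) / 2 * min (x - a) (b - x) := by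
  set m := min (x - a) (b - x)
  set t := π / (b - a) * (x - a)
  have hba : 0 < b - a := sub_pos.2 hab
  have hm : 0 ≤ m := le_min (sub_nonneg.2 hx.1) (sub_nonneg.2 hx.2)
  have ht0 : 0 ≤ t := mul_nonneg (by positivity) (sub_nonneg.2 hx.1)
  have htπ : t ≤ π := by
    simp only [t]
    rw [div_mul_eq_mul_div, div_le_iff₀ hba]
    nlinarith [pi_pos, hx.2]
  have hmin : min t (π - t) = π / (b - a) * m := by
    rw [mul_min_of_nonneg _ _ (by positivity)]
    congr 1
    simp only [t]
    field_simp
    ring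
  have hmcot : m * |cot t| ≤ (b - a) / 2 := by
    have hcot := min_mul_abs_cot_le ht0 htπ
    rw [hmin, mul_assoc, div_mul_eq_mul_div, div_le_iff₀ hba] at hcot
    nlinarith [pi_pos]
  calc |y ^ 2 * cot t| = |y| ^ 2 * |cot t| := by rw [abs_mul, abs_pow]
    _ ≤ (M * m) ^ 2 * |cot t| := by gcongr
    _ = M ^ 2 * m * (m * |cot t|) := by ring
    _ ≤ M ^ 2 * m * ((b - a) / 2) := by gcongr
    _ = M ^ 2 * (b - a) / 2 * m := by ring

lemma continuousOn_sq_mul_cot (hab : a < b)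
    (hf : ∀ x ∈ Icc a b, HasDerivWithinAt f (f' x) (Icc a b) x) (hf' : ContinuousOn f' (Icc a b))
    (ha : f a = 0) (hb : f b = 0) :
    ContinuousOn (fun x => f x ^ 2 * cot (π / (b - a) * (x - a))) (Icc a b) := by
  obtain ⟨M, hM⟩ := isCompact_Icc.exists_bound_of_continuousOn hf'
  have hbound : ∀ x ∈ Icc a b, ‖f x ^ 2 * cot (π / (b - a) * (x - a))‖
      ≤ M ^ 2 * (b - a) / 2 * min (x - a) (b - x) := fun x hx =>
    abs_sq_mul_cot_le hab hx (abs_le_mul_min_of_hasDerivWithinAt hf hM ha hb hx)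
  intro x hx
  by_cases hxo : x ∈ Ioo a b
  · have hfx := ((hf x hx).hasDerivAt (Icc_mem_nhds hxo.1 hxo.2)).continuousAt
    have hcot := (hasDerivAt_cot (sin_pi_div_mul_sub_pos hxo).ne').continuousAt.comp
      (f := fun y => π / (b - a) * (y - a)) (by fun_prop)
    exact ((hfx.pow 2).mul hcot).continuousWithinAt
  · have hm : min (x - a) (b - x) = 0 := by
      rcases eq_endpoints_or_mem_Ioo_of_mem_Icc hx with rfl | rfl | h
      · simp [hab.le]
      · simp [hab.le]
      · exact absurd h hxo
    have hzero : f x ^ 2 * cot (π / (b - a) * (x - a)) = 0 :=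
      norm_le_zero_iff.1 (by simpa [hm] using hbound x hx)
    rw [ContinuousWithinAt, hzero]
    refine squeeze_zero_norm' (eventually_nhdsWithin_of_forall hbound) ?_
    have : Continuous fun y => M ^ 2 * (b - a) / 2 * min (y - a) (b - y) := by fun_prop
    simpa [hm] using (this.tendsto x).mono_left nhdsWithin_le_nhds

theorem integral_sq_le_mul_integral_deriv_sq (hab : a < b)
    (hf : ∀ x ∈ Icc a b, HasDerivWithinAt f (f' x) (Icc a b) x) (hf' : ContinuousOn f' (Icc a b))
    (ha : f a = 0) (hb : f b = 0) :
    ∫ x in a..b, f x ^ 2 ≤ ((b - a) / π) ^ 2 * ∫ x in a..b, f' x ^ 2 := by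
  set c := π / (b - a)
  have hc : 0 < c := div_pos pi_pos (sub_pos.2 hab)
  have hfc : ContinuousOn f (Icc a b) := fun x hx => (hf x hx).continuousWithinAt
  have hderiv : ∀ x ∈ Ioo a b, HasDerivAt (fun y => -c * (f y ^ 2 * cot (c * (y - a))))
      (-c * (2 * f x * f' x * cot (c * (x - a)) - c * f x ^ 2 / sin (c * (x - a)) ^ 2)) x := by
    intro x hx
    have hfx := (hf x (Ioo_subset_Icc_self hx)).hasDerivAt (Icc_mem_nhds hx.1 hx.2)
    have hlin : HasDerivAt (fun y => c * (y - a)) c x := by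
      simpa using ((hasDerivAt_id x).sub_const a).const_mul c
    have hsin : sin (c * (x - a)) ≠ 0 := (sin_pi_div_mul_sub_pos hx).ne'
    refine ((hfx.pow 2).mul ((hasDerivAt_cot hsin).comp x hlin)).const_mul (-c) |>.congr_deriv ?_
    simp only [Function.comp_apply, Pi.pow_apply]
    ring
  have hle : ∀ x ∈ Ioo a b, c ^ 2 * f x ^ 2 - f' x ^ 2
      ≤ -c * (2 * f x * f' x * cot (c * (x - a)) - c * f x ^ 2 / sin (c * (x - a)) ^ 2) := by
    intro x hx
    have hsin : sin (c * (x - a)) ≠ 0 := (sin_pi_div_mul_sub_pos hx).ne'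
    have hcsc : 1 / sin (c * (x - a)) ^ 2 = 1 + cot (c * (x - a)) ^ 2 := by
      rw [cot_eq_cos_div_sin]
      field_simp
      linear_combination -sin_sq_add_cos_sq (c * (x - a))
    rw [div_eq_mul_one_div _ (sin _ ^ 2), hcsc]
    nlinarith [sq_nonneg (f' x - c * f x * cot (c * (x - a)))]
  have hf2 : IntervalIntegrable (fun x => f x ^ 2) volume a b :=
    (hfc.pow 2).intervalIntegrable_of_Icc hab.le
  have hf'2 : IntervalIntegrable (fun x => f' x ^ 2) volume a b :=
    (hf'.pow 2).intervalIntegrable_of_Icc hab.le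
  have key : ∫ x in a..b, (c ^ 2 * f x ^ 2 - f' x ^ 2) ≤ 0 := by
    simpa [ha, hb] using integral_le_sub_of_hasDeriv_right_of_le
      (g := fun x => -c * (f x ^ 2 * cot (c * (x - a)))) hab.le
      (continuousOn_const.mul (continuousOn_sq_mul_cot hab hf hf' ha hb))
      (fun x hx => (hderiv x hx).hasDerivWithinAt)
      ((continuousOn_const.mul (hfc.pow 2)).sub (hf'.pow 2)).integrableOn_Icc hle
  rw [intervalIntegral.integral_sub (hf2.const_mul _) hf'2,
    intervalIntegral.integral_const_mul] at key
  rw [show ((b - a) / π) ^ 2 = (c ^ 2)⁻¹ by rw [← inv_pow, inv_div], ← div_eq_inv_mul,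
    le_div_iff₀' (by positivity)]
  linarith

end Wirtinger

section SecondDerivative

variable {a b : ℝ} {e e' e'' : ℝ → ℝ}

theorem integral_deriv_sq_le_mul_integral_deriv2_sq (hab : a < b)
    (he : ∀ x ∈ Icc a b, HasDerivWithinAt e (e' x) (Icc a b) x)
    (he' : ∀ x ∈ Icc a b, HasDerivWithinAt e' (e'' x) (Icc a b) x)
    (he'' : ContinuousOn e'' (Icc a b)) (ha : e a = 0) (hb : e b = 0) :
    ∫ x in a..b, e' x ^ 2 ≤ ((b - a) / π) ^ 2 * ∫ x in a..b, e'' x ^ 2 := by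
  set κ := ((b - a) / π) ^ 2
  have hκ : 0 < κ := by have := sub_pos.2 hab; positivity
  have hec : ContinuousOn e (Icc a b) := fun x hx => (he x hx).continuousWithinAt
  have he'c : ContinuousOn e' (Icc a b) := fun x hx => (he' x hx).continuousWithinAt
  have hpoincare := integral_sq_le_mul_integral_deriv_sq hab he he'c ha hb
  have hibp : ∫ x in a..b, e x * e'' x = -∫ x in a..b, e' x ^ 2 := by
    have := integral_mul_deriv_eq_deriv_mul_of_hasDerivWithinAt (u := e) (v := e')
      (by rwa [uIcc_of_le hab.le]) (by rwa [uIcc_of_le hab.le])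
      (he'c.intervalIntegrable_of_Icc hab.le) (he''.intervalIntegrable_of_Icc hab.le)
    simpa [ha, hb, sq] using this
  have hsq : 0 ≤ ∫ x in a..b, (e x + κ * e'' x) ^ 2 :=
    intervalIntegral.integral_nonneg hab.le fun x _ => sq_nonneg _
  have hexpand : ∫ x in a..b, (e x + κ * e'' x) ^ 2 = (∫ x in a..b, e x ^ 2)
      + 2 * κ * (∫ x in a..b, e x * e'' x) + κ ^ 2 * ∫ x in a..b, e'' x ^ 2 := by
    have h1 : IntervalIntegrable (fun x => e x ^ 2) volume a b :=
      (hec.pow 2).intervalIntegrable_of_Icc hab.le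
    have h2 : IntervalIntegrable (fun x => e x * e'' x) volume a b :=
      (hec.mul he'').intervalIntegrable_of_Icc hab.le
    have h3 : IntervalIntegrable (fun x => e'' x ^ 2) volume a b :=
      (he''.pow 2).intervalIntegrable_of_Icc hab.le
    simp_rw [show ∀ x, (e x + κ * e'' x) ^ 2 = e x ^ 2 + 2 * κ * (e x * e'' x) + κ ^ 2 * e'' x ^ 2
      from fun x => by ring]
    rw [intervalIntegral.integral_add (h1.add (h2.const_mul _)) (h3.const_mul _),
      intervalIntegral.integral_add h1 (h2.const_mul _), intervalIntegral.integral_const_mul,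
      intervalIntegral.integral_const_mul]
  rw [hexpand, hibp] at hsq
  have : κ * ∫ x in a..b, e' x ^ 2 ≤ κ * (κ * ∫ x in a..b, e'' x ^ 2) := by linarith
  exact le_of_mul_le_mul_left this hκ

theorem integral_sq_le_mul_integral_deriv2_sq (hab : a < b)
    (he : ∀ x ∈ Icc a b, HasDerivWithinAt e (e' x) (Icc a b) x)
    (he' : ∀ x ∈ Icc a b, HasDerivWithinAt e' (e'' x) (Icc a b) x)
    (he'' : ContinuousOn e'' (Icc a b)) (ha : e a = 0) (hb : e b = 0) :
    ∫ x in a..b, e x ^ 2 ≤ ((b - a) / π) ^ 4 * ∫ x in a..b, e'' x ^ 2 :=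
  calc ∫ x in a..b, e x ^ 2 ≤ ((b - a) / π) ^ 2 * ∫ x in a..b, e' x ^ 2 :=
        integral_sq_le_mul_integral_deriv_sq hab he
          (fun x hx => (he' x hx).continuousWithinAt) ha hb
    _ ≤ ((b - a) / π) ^ 2 * (((b - a) / π) ^ 2 * ∫ x in a..b, e'' x ^ 2) := by
        gcongr
        exact integral_deriv_sq_le_mul_integral_deriv2_sq hab he he' he'' ha hb
    _ = ((b - a) / π) ^ 4 * ∫ x in a..b, e'' x ^ 2 := by ring

end SecondDerivative

section Mesh

variable {k : ℕ} {u : ℝ → ℝ} {i : ℕ}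

noncomputable def meshAffine (k : ℕ) (u : ℝ → ℝ) (i : ℕ) (x : ℝ) : ℝ :=
  u (i / k) + (u ((i + 1) / k) - u (i / k)) * (x * k - i)

lemma Ik_eqOn_meshAffine (hk : k ≠ 0) :
    EqOn (Ik k u) (meshAffine k u i) (Ico (i / k) ((i + 1) / k)) := by
  rintro x ⟨hleft, hright⟩
  have hk0 : (0 : ℝ) < k := by positivity
  have hfloor : ⌊x * k⌋ = i := by
    rw [div_le_iff₀ hk0] at hleft
    rw [lt_div_iff₀ hk0] at hright
    rw [Int.floor_eq_iff]
    push_cast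
    constructor <;> linarith
  simp [Ik, meshAffine, hfloor]

lemma meshAffine_left (hk : k ≠ 0) : meshAffine k u i (i / k) = u (i / k) := by
  simp [meshAffine, hk]

lemma meshAffine_right (hk : k ≠ 0) : meshAffine k u i ((i + 1) / k) = u ((i + 1) / k) := by
  simp [meshAffine, hk]

lemma hasDerivAt_meshAffine (x : ℝ) :
    HasDerivAt (meshAffine k u i) ((u ((i + 1) / k) - u (i / k)) * k) x := by
  refine ((((hasDerivAt_id x).mul_const (k : ℝ)).sub_const (i : ℝ)).const_mul
    (u ((i + 1) / k) - u (i / k)) |>.const_add (u (i / k))).congr_deriv ?_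
  simp

lemma integral_zero_one_eq_sum_mesh (hk : k ≠ 0) {F : ℝ → ℝ}
    (hF : ∀ i < k, IntervalIntegrable F volume (i / k) ((i + 1) / k)) :
    ∫ x in (0 : ℝ)..1, F x = ∑ i ∈ Finset.range k, ∫ x in (i / k : ℝ)..((i + 1) / k), F x := by
  have := sum_integral_adjacent_intervals (a := fun i : ℕ => (i : ℝ) / k) (n := k) (μ := volume)
    (by simpa using hF)
  simpa [hk] using this.symm

lemma Icc_mesh_subset_Icc (hi : i < k) : Icc ((i : ℝ) / k) ((i + 1) / k) ⊆ Icc 0 1 := by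
  have hk0 : (0 : ℝ) < k := by exact_mod_cast (Nat.zero_le i).trans_lt hi
  refine Icc_subset_Icc (by positivity) ?_
  rw [div_le_one hk0]
  exact_mod_cast hi

lemma integral_sq_sub_meshAffine_le (hk : k ≠ 0) {u' u'' : ℝ → ℝ}
    (hu : ∀ x ∈ Icc ((i : ℝ) / k) ((i + 1) / k),
      HasDerivWithinAt u (u' x) (Icc ((i : ℝ) / k) ((i + 1) / k)) x)
    (hu' : ∀ x ∈ Icc ((i : ℝ) / k) ((i + 1) / k),
      HasDerivWithinAt u' (u'' x) (Icc ((i : ℝ) / k) ((i + 1) / k)) x)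
    (hu'' : ContinuousOn u'' (Icc ((i : ℝ) / k) ((i + 1) / k))) :
    ∫ x in (i / k : ℝ)..((i + 1) / k), (u x - meshAffine k u i x) ^ 2
      ≤ (1 / k / π) ^ 4 * ∫ x in (i / k : ℝ)..((i + 1) / k), u'' x ^ 2 := by
  have hlen : ((i : ℝ) + 1) / k - i / k = 1 / k := by ring
  rw [← hlen]
  exact integral_sq_le_mul_integral_deriv2_sq (by gcongr; linarith)
    (fun x hx => (hu x hx).sub (hasDerivAt_meshAffine x).hasDerivWithinAt)
    (fun x hx => (hu' x hx).sub_const _) hu''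
    (by simp [meshAffine_left hk]) (by simp [meshAffine_right hk])

end Mesh

theorem interpolation_error_L2_general
    (k : ℕ) (hk : 1 ≤ k) (h : ℝ) (hh : h = 1 / k) (u u' u'' : ℝ → ℝ)
    (hderiv : ∀ x ∈ Set.Icc (0 : ℝ) 1, HasDerivWithinAt u (u' x) (Set.Icc (0 : ℝ) 1) x)
    (hderiv' : ∀ x ∈ Set.Icc (0 : ℝ) 1, HasDerivWithinAt u' (u'' x) (Set.Icc (0 : ℝ) 1) x)
    (hcont : ContinuousOn u'' (Set.Icc (0 : ℝ) 1)) :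
    ∫ x in (0 : ℝ)..1, (u x - Ik k u x) ^ 2
      ≤ (h / Real.pi) ^ 4 * ∫ x in (0 : ℝ)..1, (u'' x) ^ 2 := by
  have hk0 : k ≠ 0 := by omega
  have hnode (i : ℕ) : (i : ℝ) / k ≤ (i + 1) / k := by gcongr; linarith
  have herr (i : ℕ) : EqOn (fun x => (u x - Ik k u x) ^ 2) (fun x => (u x - meshAffine k u i x) ^ 2)
      (uIoo (i / k) ((i + 1) / k)) := fun x hx => by
    rw [uIoo_of_le (hnode i)] at hx
    simp only [Ik_eqOn_meshAffine hk0 (Ioo_subset_Ico_self hx)]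
  have hcont_err (i : ℕ) (hi : i < k) :
      ContinuousOn (fun x => (u x - meshAffine k u i x) ^ 2) (Icc ((i : ℝ) / k) ((i + 1) / k)) :=
    (((HasDerivWithinAt.continuousOn hderiv).mono (Icc_mesh_subset_Icc hi)).sub
      (fun x _ => (hasDerivAt_meshAffine x).continuousAt.continuousWithinAt)).pow 2
  subst hh
  rw [integral_zero_one_eq_sum_mesh hk0 fun i hi => (intervalIntegrable_congr_uIoo (herr i)).2
      ((hcont_err i hi).intervalIntegrable_of_Icc (hnode i)),
    integral_zero_one_eq_sum_mesh (F := fun x => u'' x ^ 2) hk0 fun i hi =>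
      ((hcont.mono (Icc_mesh_subset_Icc hi)).pow 2).intervalIntegrable_of_Icc (hnode i),
    Finset.mul_sum]
  refine Finset.sum_le_sum fun i hi => ?_
  have hsub := Icc_mesh_subset_Icc (Finset.mem_range.1 hi)
  rw [integral_congr_uIoo (herr i)]
  exact integral_sq_sub_meshAffine_le hk0 (fun x hx => (hderiv x (hsub hx)).mono hsub)
    (fun x hx => (hderiv' x (hsub hx)).mono hsub) (hcont.mono hsub)

/-- **L² interpolation error estimate.**  For `u` twice continuously differentiable
on `[0,1]` with `u 0 = u 1 = 0`, the piecewise linear interpolant on the mesh of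
size `h = 1/k` satisfies `∫_0^1 (u - I_k u)² ≤ (h/π)⁴ ∫_0^1 u''²`. -/
theorem interpolation_error_L2
    (k : ℕ) (hk : 1 ≤ k) (h : ℝ) (hh : h = 1 / k) (u u' u'' : ℝ → ℝ)
    (hderiv : ∀ x ∈ Set.Icc (0 : ℝ) 1, HasDerivWithinAt u (u' x) (Set.Icc (0 : ℝ) 1) x)
    (hderiv' : ∀ x ∈ Set.Icc (0 : ℝ) 1, HasDerivWithinAt u' (u'' x) (Set.Icc (0 : ℝ) 1) x)
    (hcont : ContinuousOn u'' (Set.Icc (0 : ℝ) 1))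
    (h0 : u 0 = 0) (h1 : u 1 = 0) :
    ∫ x in (0 : ℝ)..1, (u x - Ik k u x) ^ 2
      ≤ (h / Real.pi) ^ 4 * ∫ x in (0 : ℝ)..1, (u'' x) ^ 2 :=
  interpolation_error_L2_general k hk h hh u u' u'' hderiv hderiv' hcont
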